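/- Let G be a finite simple graph containing at least one isolated vertex. Then a 2-element subset {i,j} of the vertex set is counted by ℓ(G) if and only if N_G(i) = N_G(j); consequently ℓ(G) = j(G) + C(i(G), 2), where C(m,2) = m(m−1)/2 is the binomial coefficient. -/

import Mathlib

open Classical Finset

noncomputable section

/-- The mutation `μ_v(G)` of a graph `G` at a vertex `v`: edges not incident to `v`
are those of `G`; edges incident to `v` are the pairs `vw` with `w ≠ v`, `w ∉ N_G(v)`. -/
def mutation {V : Type*} (G : SimpleGraph V) (v : V) : SimpleGraph V where
  Adj x y := x ≠ y ∧
    ((x = v ∧ ¬ G.Adj v y) ∨ (y = v ∧ ¬ G.Adj v x) ∨ (x ≠ v ∧ y ≠ v ∧ G.Adj x y))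
  symm := by
    refine ⟨?_⟩
    rintro x y ⟨hxy, h | h | ⟨h1, h2, h3⟩⟩
    · exact ⟨hxy.symm, Or.inr (Or.inl h)⟩
    · exact ⟨hxy.symm, Or.inl h⟩
    · exact ⟨hxy.symm, Or.inr (Or.inr ⟨h2, h1, h3.symm⟩)⟩
  loopless := by
    refine ⟨?_⟩
    rintro x ⟨hxx, -⟩
    exact hxx rfl

/-- The relative mutation `μ_{v←u}(G)` of `G` at `v` with respect to `u`: edges not
incident to `v` are those of `G`; edges incident to `v` are the pairs `vw` with
`w ≠ v` and `w` in the symmetric difference `N_G(u) Δ N_G(v)`. -/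
def relMutation {V : Type*} (G : SimpleGraph V) (v u : V) : SimpleGraph V where
  Adj x y := x ≠ y ∧
    ((x = v ∧ (G.Adj u y ↔ ¬ G.Adj v y)) ∨ (y = v ∧ (G.Adj u x ↔ ¬ G.Adj v x)) ∨
      (x ≠ v ∧ y ≠ v ∧ G.Adj x y))
  symm := by
    refine ⟨?_⟩
    rintro x y ⟨hxy, h | h | ⟨h1, h2, h3⟩⟩
    · exact ⟨hxy.symm, Or.inr (Or.inl h)⟩
    · exact ⟨hxy.symm, Or.inl h⟩
    · exact ⟨hxy.symm, Or.inr (Or.inr ⟨h2, h1, h3.symm⟩)⟩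
  loopless := by
    refine ⟨?_⟩
    rintro x ⟨hxx, -⟩
    exact hxx rfl

/-- A vertex is isolated if it has no neighbors. -/
def isIsolated {V : Type*} (G : SimpleGraph V) (v : V) : Prop := ∀ w, ¬ G.Adj v w

/-- `pairGraph a b` is the graph `G(a,b)` on `2a+b` vertices consisting of `a`
pairwise disjoint edges `{0,1}, {2,3}, …` together with `b` isolated vertices. -/
def pairGraph (a b : ℕ) : SimpleGraph (Fin (2 * a + b)) where
  Adj x y := x ≠ y ∧ (x : ℕ) / 2 = (y : ℕ) / 2 ∧ (x : ℕ) < 2 * a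
  symm := by
    refine ⟨?_⟩
    rintro x y ⟨h1, h2, h3⟩
    exact ⟨h1.symm, h2.symm, by omega⟩
  loopless := by
    refine ⟨?_⟩
    rintro x ⟨hxx, -⟩
    exact hxx rfl

/-- The adjacency matrix `M(G)` of `G`, over `F_2`. -/
def adjMat {n : ℕ} (G : SimpleGraph (Fin n)) : Matrix (Fin n) (Fin n) (ZMod 2) :=
  fun i j => if G.Adj i j then 1 else 0

/-- The matrix `X(G)` over `F_2`: upper-left `n×n` block is `M(G)`, and the last row
and column consist entirely of `1`'s except for the `(n+1, n+1)` entry, which is `0`. -/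
def Xmat {n : ℕ} (G : SimpleGraph (Fin n)) :
    Matrix (Fin (n + 1)) (Fin (n + 1)) (ZMod 2) :=
  fun i j =>
    if hi : (i : ℕ) < n then
      if hj : (j : ℕ) < n then adjMat G ⟨i, hi⟩ ⟨j, hj⟩ else 1
    else if (j : ℕ) < n then 1 else 0

/-- Finite simple graphs on vertex sets `{1, …, n}`, bundled with `n`. -/
abbrev GraphOn := Σ n : ℕ, SimpleGraph (Fin n)

/-- One move: either pass to an isomorphic graph, or apply a mutation `μ_v`, or apply a
relative mutation `μ_{v←w}` to a graph containing an isolated vertex `u ∉ {v, w}`. -/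
inductive MoveStep : GraphOn → GraphOn → Prop
  | iso {n m : ℕ} (G : SimpleGraph (Fin n)) (H : SimpleGraph (Fin m)) :
      Nonempty (G ≃g H) → MoveStep ⟨n, G⟩ ⟨m, H⟩
  | mut {n : ℕ} (G : SimpleGraph (Fin n)) (v : Fin n) :
      MoveStep ⟨n, G⟩ ⟨n, mutation G v⟩
  | relMut {n : ℕ} (G : SimpleGraph (Fin n)) (v w u : Fin n) :
      v ≠ w → u ≠ v → u ≠ w → isIsolated G u →
      MoveStep ⟨n, G⟩ ⟨n, relMutation G v w⟩

/-- `G ≈ G'`: `G'` is obtained from `G`, up to graph isomorphism, by a finite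
sequence of mutations and relative mutations (the latter in the presence of an
isolated vertex distinct from the two vertices involved). -/
def graphEquiv (A B : GraphOn) : Prop := Relation.ReflTransGen MoveStep A B

/-- The induced subgraph of `G` on `{i, j, k}` has an even number of edges. -/
def evenTriple {V : Type*} (G : SimpleGraph V) (i j k : V) : Prop :=
  Even ((if G.Adj i j then 1 else 0) + (if G.Adj i k then 1 else 0) +
    (if G.Adj j k then 1 else 0) : ℕ)

/-- `ℓ(G)`: the number of 2-element subsets `{i, j}` (encoded as pairs `i < j`) such
that for every vertex `k ∉ {i, j}` the induced subgraph of `G` on `{i, j, k}` has an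
even number of edges. -/
def ell {n : ℕ} (G : SimpleGraph (Fin n)) : ℕ :=
  ((univ : Finset (Fin n × Fin n)).filter
    (fun p => p.1 < p.2 ∧ ∀ k, k ≠ p.1 → k ≠ p.2 → evenTriple G p.1 p.2 k)).card

/-- `J(G)`: the set of 2-element subsets `{i, j}` (encoded as pairs `i < j`) with
`N_G(i) = N_G(j) ≠ ∅`. -/
def Jfinset {n : ℕ} (G : SimpleGraph (Fin n)) : Finset (Fin n × Fin n) :=
  (univ : Finset (Fin n × Fin n)).filter
    (fun p => p.1 < p.2 ∧ G.neighborSet p.1 = G.neighborSet p.2 ∧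
      G.neighborSet p.1 ≠ ∅)

/-- `j(G) = #J(G)`. -/
def jnum {n : ℕ} (G : SimpleGraph (Fin n)) : ℕ := (Jfinset G).card

/-- `i(G)`: the number of isolated vertices of `G`. -/
def numIso {n : ℕ} (G : SimpleGraph (Fin n)) : ℕ :=
  ((univ : Finset (Fin n)).filter (fun v => isIsolated G v)).card

end

/-!
For `k ∉ {i, j}`, the triangle `{i, j, k}` carries an even number of edges iff
`i ~ j` exactly when `k` is adjacent to precisely one of `i`, `j`. Taking for `k` an isolated
vertex shows `i ≁ j`, and then the condition says that `k ~ i ↔ k ~ j` for all other `k`,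
i.e. `N(i) = N(j)`. A pair with `N(i) = N(j)` is counted by `j(G)` when this neighbourhood
is nonempty, and is a pair of isolated vertices otherwise.
-/

section Parity

variable {V : Type*} (G : SimpleGraph V) {i j k u : V}

lemma isIsolated_iff_neighborSet_eq_empty (v : V) :
    isIsolated G v ↔ G.neighborSet v = ∅ :=
  Set.eq_empty_iff_forall_notMem.symm

lemma evenTriple_iff : evenTriple G i j k ↔ (G.Adj i j ↔ ¬(G.Adj i k ↔ G.Adj j k)) := by
  unfold evenTriple
  by_cases hij : G.Adj i j <;> by_cases hik : G.Adj i k <;> by_cases hjk : G.Adj j k <;>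
    simp [hij, hik, hjk, Nat.even_iff]

lemma neighborSet_eq_neighborSet_iff :
    G.neighborSet i = G.neighborSet j ↔
      ¬G.Adj i j ∧ ∀ k, k ≠ i → k ≠ j → (G.Adj i k ↔ G.Adj j k) := by
  refine ⟨fun h => ⟨fun hij => ?_, fun k _ _ => Set.ext_iff.1 h k⟩, fun ⟨hij, h⟩ => ?_⟩
  · exact G.loopless.irrefl j (h ▸ hij : j ∈ G.neighborSet j)
  · ext k
    by_cases hki : k = i
    · subst hki; simpa using fun h' => hij h'.symm
    by_cases hkj : k = j
    · subst hkj; simpa using hij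
    exact h k hki hkj

variable {G}

lemma not_adj_of_forall_evenTriple (hu : isIsolated G u)
    (h : ∀ k, k ≠ i → k ≠ j → evenTriple G i j k) : ¬G.Adj i j := by
  by_cases hui : u = i
  · subst hui; exact hu j
  by_cases huj : u = j
  · subst huj; exact fun hij => hu i hij.symm
  have hiu : ¬G.Adj i u := fun h' => hu i h'.symm
  have hju : ¬G.Adj j u := fun h' => hu j h'.symm
  simpa [hiu, hju] using (evenTriple_iff G).1 (h u hui huj)

lemma forall_evenTriple_iff_neighborSet_eq (hu : isIsolated G u) :
    (∀ k, k ≠ i → k ≠ j → evenTriple G i j k) ↔ G.neighborSet i = G.neighborSet j := by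
  simp only [neighborSet_eq_neighborSet_iff, evenTriple_iff]
  constructor
  · intro h
    have hij := not_adj_of_forall_evenTriple hu fun k hki hkj =>
      (evenTriple_iff G).2 (h k hki hkj)
    exact ⟨hij, fun k hki hkj => by simpa [hij] using h k hki hkj⟩
  · rintro ⟨hij, h⟩ k hki hkj
    simpa [hij] using h k hki hkj

end Parity

lemma card_filter_lt_neighborSet_eq {n : ℕ} (G : SimpleGraph (Fin n)) :
    #{p : Fin n × Fin n | p.1 < p.2 ∧ G.neighborSet p.1 = G.neighborSet p.2} =
      jnum G + (numIso G).choose 2 := by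
  set A : Finset (Fin n × Fin n) :=
    {p : Fin n × Fin n | p.1 < p.2 ∧ G.neighborSet p.1 = G.neighborSet p.2}
  have hJ : {p ∈ A | G.neighborSet p.1 ≠ ∅} = Jfinset G := by
    ext p; simp [A, Jfinset, and_assoc]
  set I : Finset (Fin n) := {v : Fin n | isIsolated G v}
  have hI : {p ∈ A | ¬G.neighborSet p.1 ≠ ∅} = {p ∈ I ×ˢ I | p.1 < p.2} := by
    ext p
    simp only [A, I, mem_filter, mem_product, mem_univ, true_and, not_not,
      isIsolated_iff_neighborSet_eq_empty]
    grind
  rw [← card_filter_add_card_filter_not (s := A) (fun p => G.neighborSet p.1 ≠ ∅), hJ, hI,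
    card_product_filter_lt]
  rfl

/-- if `G` contains an isolated vertex, then a 2-element subset `{i, j}`
is counted by `ℓ(G)` iff `N_G(i) = N_G(j)`; consequently `ℓ(G) = j(G) + C(i(G), 2)`. -/
theorem stmt_15 {n : ℕ} (G : SimpleGraph (Fin n)) (hiso : ∃ u, isIsolated G u) :
    (∀ i j : Fin n, i ≠ j →
      ((∀ k, k ≠ i → k ≠ j → evenTriple G i j k) ↔
        G.neighborSet i = G.neighborSet j)) ∧
    ell G = jnum G + Nat.choose (numIso G) 2 := by
  obtain ⟨u, hu⟩ := hiso
  refine ⟨fun i j _ => forall_evenTriple_iff_neighborSet_eq hu, ?_⟩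
  rw [← card_filter_lt_neighborSet_eq, ell]
  congr 1
  exact filter_congr fun p _ => and_congr_right fun _ => forall_evenTriple_iff_neighborSet_eq hu
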